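/- Fix integers n ≥ 1 and d_max ≥ 1. There exists a sequence of functions (f_l)_{l ≥ 1}, where f_1 maps a pair (context in ℝ^{n×1}, finite multiset of contexts in ℝ^{n×1}) to ℝ^{n×2d_max} and, for l ≥ 2, f_l maps a pair (context in ℝ^{n×2d_max}, finite multiset of contexts in ℝ^{n×2d_max}) to ℝ^{n×2d_max}, with the following property: for every finite connected simple graph G on n vertices with maximum degree at most d_max, initializing U_i^{(0)} = 𝟙_i ∈ ℝ^{n×1} (the indicator column of v_i) and setting U_i^{(l)} = f_l(U_i^{(l-1)}, {U_j^{(l-1)} : v_j ∈ N_i}) for l ≥ 1, the rows of every local context encode the receptive field by orthogonality: for every l ≥ 1, every vertex v_i and all vertices v_j, v_k, the rows U_i^{(l)}[j,:] and U_i^{(l)}[k,:] are orthogonal in ℝ^{2d_max} if and only if (v_j, v_k) ∈ E_i^{(l)}. -/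

import Mathlib

/-! For connected `G` the receptive fields satisfy
`E_i^{(l+1)} = ⋃_{j ∈ N_i} ({v_i v_j} ∪ E_j^{(l)})` with `E_i^{(0)} = ∅`, so it suffices that
every context determine the pair `(v_i, E_i^{(l)})`: a layer decodes these pairs from its own and
its neighbours' contexts, applies the recursion and re-encodes. A pair `(v, H)` with `H ⊆ G` is
encoded by vectors in `ℝ^{2 d_max}` that are orthogonal exactly along the edges of `H` (Maehara:
add vertices one at a time, keeping any `d_max + 1` of the vectors linearly independent), with the
row of `v` doubled to record `v`. -/

open scoped Classical

/-- The receptive-field graph `(V, E_i^{(l)})` of node `i` after `l` message-passing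
layers: `E_i^{(l)} = {(p,q) ∈ E : d(i,p) ≤ l, d(i,q) ≤ l, d(i,p) + d(i,q) < 2l}`. -/
def recepGraph {V : Type*} (G : SimpleGraph V) (i : V) (l : ℕ) : SimpleGraph V where
  Adj p q := G.Adj p q ∧ G.dist i p ≤ l ∧ G.dist i q ≤ l ∧
    G.dist i p + G.dist i q < 2 * l
  symm := ⟨fun p q h => ⟨h.1.symm, h.2.2.1, h.2.1, by have := h.2.2.2; omega⟩⟩
  loopless := ⟨fun p h => G.irrefl h.1⟩

/-- Width of the local contexts: `1` at initialization, `2·d_max` afterwards. -/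
def width (dmax : ℕ) : ℕ → ℕ
  | 0 => 1
  | _ + 1 => 2 * dmax

namespace SimpleGraph

variable {V : Type*} {G : SimpleGraph V}

theorem Reachable.exists_adj_dist_add_one_eq {u v : V} (h : G.Reachable u v) (hne : u ≠ v) :
    ∃ w, G.Adj u w ∧ G.dist w v + 1 = G.dist u v := by
  obtain ⟨p, hp⟩ := h.exists_walk_length_eq_dist
  cases p with
  | nil => exact absurd rfl hne
  | @cons _ w _ huw q =>
    refine ⟨w, huw, le_antisymm ?_ ?_⟩
    · rw [← hp, Walk.length_cons]
      exact Nat.add_le_add_right (dist_le q) 1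
    · have := huw.reachable.dist_triangle_left v
      rw [dist_eq_one_iff_adj.mpr huw] at this
      omega

end SimpleGraph

open SimpleGraph

section RecepGraph

variable {V : Type*} {G : SimpleGraph V}

theorem recepGraph_adj_iff {i p q : V} {l : ℕ} :
    (recepGraph G i l).Adj p q ↔ G.Adj p q ∧ (G.dist i p < l ∨ G.dist i q < l) := by
  refine ⟨fun ⟨hpq, hp, hq, hsum⟩ => ⟨hpq, by omega⟩, fun ⟨hpq, hlt⟩ => ⟨hpq, ?_⟩⟩
  have := hpq.diff_dist_adj (u := i)
  omega

theorem recepGraph_le (i : V) (l : ℕ) : recepGraph G i l ≤ G :=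
  fun _ _ h => h.1

theorem recepGraph_zero (i : V) : recepGraph G i 0 = ⊥ := by
  ext p q
  simp [recepGraph_adj_iff]

theorem recepGraph_succ (hG : G.Connected) (i : V) (l : ℕ) :
    recepGraph G i (l + 1) = ⨆ (j) (_ : G.Adj i j), edge i j ⊔ recepGraph G j l := by
  ext p q
  simp only [iSup_adj, sup_adj, edge_adj, recepGraph_adj_iff, exists_prop]
  constructor
  · rintro ⟨hpq, hlt⟩
    have hpred : ∀ x, x ≠ i → G.dist i x < l + 1 → ∃ j, G.Adj i j ∧ G.dist j x < l := by
      intro x hx hlt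
      obtain ⟨j, hij, hj⟩ := (hG.preconnected i x).exists_adj_dist_add_one_eq (Ne.symm hx)
      exact ⟨j, hij, by omega⟩
    by_cases hpi : p = i
    · exact ⟨q, hpi ▸ hpq, Or.inl ⟨Or.inl ⟨hpi, rfl⟩, hpq.ne⟩⟩
    by_cases hqi : q = i
    · exact ⟨p, hqi ▸ hpq.symm, Or.inl ⟨Or.inr ⟨rfl, hqi⟩, hpq.ne⟩⟩
    rcases hlt with hlt | hlt
    · obtain ⟨j, hij, hj⟩ := hpred p hpi hlt
      exact ⟨j, hij, Or.inr ⟨hpq, Or.inl hj⟩⟩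
    · obtain ⟨j, hij, hj⟩ := hpred q hqi hlt
      exact ⟨j, hij, Or.inr ⟨hpq, Or.inr hj⟩⟩
  · rintro ⟨j, hij, ⟨⟨rfl, rfl⟩ | ⟨rfl, rfl⟩, -⟩ | ⟨hpq, hlt⟩⟩
    · exact ⟨hij, by simp⟩
    · exact ⟨hij.symm, by simp⟩
    · have hp := hij.reachable.dist_triangle_left p
      have hq := hij.reachable.dist_triangle_left q
      rw [dist_eq_one_iff_adj.mpr hij] at hp hq
      exact ⟨hpq, by omega⟩

end RecepGraph

section MessagePassing

variable {S V : Type*} {X : ℕ → Type*} [Nonempty S]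

noncomputable def simulationLayer (enc : (l : ℕ) → S → X l) (T : ℕ → Set S)
    (step : S → Multiset S → S) (l : ℕ) (M : X l) (Ms : Multiset (X l)) : X (l + 1) :=
  enc (l + 1) <|
    step (Function.invFunOn (enc l) (T l) M) (Ms.map (Function.invFunOn (enc l) (T l)))

theorem simulationLayer_run_eq {enc : (l : ℕ) → S → X l} {T : ℕ → Set S}
    {step : S → Multiset S → S} (henc : ∀ l, Set.InjOn (enc l) (T l)) (N : V → Multiset V)
    (state : ℕ → V → S) (hT : ∀ l i, state l i ∈ T l)
    (hstate : ∀ l i, state (l + 1) i = step (state l i) ((N i).map (state l)))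
    (U : (l : ℕ) → V → X l) (hU0 : ∀ i, U 0 i = enc 0 (state 0 i))
    (hU : ∀ l i, U (l + 1) i = simulationLayer enc T step l (U l i) ((N i).map (U l))) :
    ∀ l i, U l i = enc l (state l i) := by
  intro l
  induction l with
  | zero => exact hU0
  | succ l ih =>
    intro i
    have hdec : Function.invFunOn (enc l) (T l) ∘ U l = state l := funext fun j => by
      rw [Function.comp_apply, ih j]
      exact (henc l).leftInvOn_invFunOn (hT l j)
    rw [hU, simulationLayer, Multiset.map_map, hdec, hstate, ← congrFun hdec i]
    rfl

end MessagePassing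

def receptiveStep {V : Type*} (x : V × SimpleGraph V) (xs : Multiset (V × SimpleGraph V)) :
    V × SimpleGraph V :=
  (x.1, ⨆ y ∈ xs, edge x.1 y.1 ⊔ y.2)

theorem receptiveStep_recepGraph {V : Type*} {G : SimpleGraph V} (hG : G.Connected) (i : V)
    [Fintype (G.neighborSet i)] (l : ℕ) :
    receptiveStep (i, recepGraph G i l)
      ((G.neighborFinset i).val.map fun j => (j, recepGraph G j l)) =
    (i, recepGraph G i (l + 1)) := by
  rw [recepGraph_succ hG]
  ext p q
  · rfl
  · simp [receptiveStep, iSup_adj]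

theorem Submodule.exists_mem_forall_notMem_of_forall_not_le {K M ι : Type*} [Field K]
    [Infinite K] [AddCommGroup M] [Module K M] [Finite ι] (W : Submodule K M)
    (p : ι → Submodule K M) (h : ∀ i, ¬W ≤ p i) : ∃ x ∈ W, ∀ i, x ∉ p i := by
  obtain ⟨x, hx⟩ := Submodule.exists_forall_notMem_of_forall_ne_top
    (fun i => (p i).comap W.subtype) fun i => by rw [Ne, comap_subtype_eq_top]; exact h i
  exact ⟨x, x.2, hx⟩

theorem finrank_span_image_finset_le {K V E : Type*} [DivisionRing K] [AddCommGroup E]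
    [Module K E] (u : V → E) (s : Finset V) :
    Module.finrank K (Submodule.span K (u '' s)) ≤ s.card := by
  classical
  rw [← Finset.coe_image]
  exact (finrank_span_finset_le_card _).trans Finset.card_image_le

namespace SimpleGraph

open scoped InnerProductSpace

section GeneralOrthRep

variable {V E : Type*} [NormedAddCommGroup E] [InnerProductSpace ℝ E]
  {H : SimpleGraph V} {d : ℕ} {s : Finset V} {u : V → E}

variable (H d) in
structure IsGeneralOrthRepOn (s : Finset V) (u : V → E) : Prop where
  inner_eq_zero_iff : ∀ j ∈ s, ∀ k ∈ s, ⟪u j, u k⟫_ℝ = 0 ↔ H.Adj j k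
  linearIndepOn : ∀ t ⊆ s, t.card ≤ d + 1 → LinearIndepOn ℝ u (t : Set V)

theorem card_le_of_coe_subset_neighborSet [Finite V] (hdeg : ∀ v, (H.neighborSet v).ncard ≤ d)
    {v : V} {t : Finset V} (ht : ↑t ⊆ H.neighborSet v) : t.card ≤ d := by
  rw [← Set.ncard_coe_finset]
  exact (Set.ncard_le_ncard ht).trans (hdeg v)

theorem card_filter_adj_le [Finite V] (hdeg : ∀ v, (H.neighborSet v).ncard ≤ d) (v : V)
    (s : Finset V) : (s.filter (H.Adj v)).card ≤ d :=
  card_le_of_coe_subset_neighborSet hdeg fun _ hw => (Finset.mem_filter.1 hw).2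

open Submodule in
/-- The only place where the dimension `2 d` is needed: equality would make `v` and the `d`
vertices of `T` neighbours of a common neighbour of `v`. -/
theorem orthogonal_span_neighbors_not_le_span [Finite V] [FiniteDimensional ℝ E] (hd : 1 ≤ d)
    (hE : 2 * d ≤ Module.finrank ℝ E) (hdeg : ∀ v, (H.neighborSet v).ncard ≤ d)
    (horth : ∀ j ∈ s, ∀ k ∈ s, ⟪u j, u k⟫_ℝ = 0 ↔ H.Adj j k) {v : V} (hv : v ∉ s)
    {T : Finset V} (hTs : T ⊆ s) (hT : T.card ≤ d) :
    ¬(span ℝ (u '' (s.filter (H.Adj v))))ᗮ ≤ span ℝ (u '' T) := by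
  set S := s.filter (H.Adj v)
  set K := span ℝ (u '' S)
  set P := span ℝ (u '' T)
  intro hle
  have hS : S.card ≤ d := card_filter_adj_le hdeg v s
  have hKS : Module.finrank ℝ K ≤ S.card := finrank_span_image_finset_le u S
  have hPT : Module.finrank ℝ P ≤ T.card := finrank_span_image_finset_le u T
  have hKP := Submodule.finrank_mono hle
  have hsum := K.finrank_add_finrank_orthogonal
  have hKP_eq : Kᗮ = P := eq_of_le_of_finrank_le hle (by omega)
  obtain ⟨s₀, hs₀⟩ : S.Nonempty := Finset.card_pos.1 (by omega)
  have hs₀s : s₀ ∈ s := (Finset.mem_filter.1 hs₀).1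
  have hadj : ↑(insert v T) ⊆ H.neighborSet s₀ := by
    intro w hw
    rcases Finset.mem_insert.1 hw with rfl | hwT
    · exact (Finset.mem_filter.1 hs₀).2.symm
    · have hw : u w ∈ Kᗮ := hKP_eq ▸ subset_span ⟨w, hwT, rfl⟩
      exact (horth s₀ hs₀s w (hTs hwT)).1
        (inner_right_of_mem_orthogonal (K := K) (subset_span ⟨s₀, hs₀, rfl⟩) hw)
  have := card_le_of_coe_subset_neighborSet hdeg hadj
  rw [Finset.card_insert_of_notMem fun h => hv (hTs h)] at this
  omega

theorem IsGeneralOrthRepOn.notMem_span_filter_adj [Finite V]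
    (hdeg : ∀ v, (H.neighborSet v).ncard ≤ d) (hu : IsGeneralOrthRepOn H d s u) {v w : V}
    (hw : w ∈ s) (hvw : ¬H.Adj v w) : u w ∉ Submodule.span ℝ (u '' (s.filter (H.Adj v))) := by
  have hwS : w ∉ s.filter (H.Adj v) := fun h => hvw (Finset.mem_filter.1 h).2
  have hli := hu.linearIndepOn (insert w (s.filter (H.Adj v)))
    (Finset.insert_subset hw (Finset.filter_subset _ _))
    (by rw [Finset.card_insert_of_notMem hwS]; exact Nat.succ_le_succ (card_filter_adj_le hdeg v s))
  rw [Finset.coe_insert, linearIndepOn_insert (by exact_mod_cast hwS)] at hli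
  exact hli.2

open Submodule in
theorem IsGeneralOrthRepOn.exists_extension_vector [Finite V] [FiniteDimensional ℝ E] (hd : 1 ≤ d)
    (hE : 2 * d ≤ Module.finrank ℝ E) (hdeg : ∀ v, (H.neighborSet v).ncard ≤ d)
    (hu : IsGeneralOrthRepOn H d s u) {v : V} (hv : v ∉ s) :
    ∃ x ∈ (span ℝ (u '' (s.filter (H.Adj v))))ᗮ, (∀ w ∈ s, ¬H.Adj v w → ⟪u w, x⟫_ℝ ≠ 0) ∧
      ∀ T ⊆ s, T.card ≤ d → x ∉ span ℝ (u '' T) := by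
  obtain ⟨x, hxW, hx⟩ := exists_mem_forall_notMem_of_forall_not_le
    (span ℝ (u '' (s.filter (H.Adj v))))ᗮ
    (Sum.elim (fun w : ↥(s.filter (¬H.Adj v ·)) => (ℝ ∙ u w)ᗮ)
      (fun T : ↥(s.powerset.filter (·.card ≤ d)) => span ℝ (u '' T)))
    (by
      rintro (⟨w, hw⟩ | ⟨T, hT⟩)
      · rw [Finset.mem_filter] at hw
        rw [Sum.elim_inl, orthogonal_le_orthogonal_iff, span_singleton_le_iff_mem]
        exact hu.notMem_span_filter_adj hdeg hw.1 hw.2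
      · rw [Finset.mem_filter, Finset.mem_powerset] at hT
        exact orthogonal_span_neighbors_not_le_span hd hE hdeg hu.inner_eq_zero_iff hv hT.1 hT.2)
  refine ⟨x, hxW, fun w hw hvw => ?_, fun T hTs hT => ?_⟩
  · exact mt mem_orthogonal_singleton_iff_inner_right.2 (hx (Sum.inl ⟨w, by simp [hw, hvw]⟩))
  · exact hx (Sum.inr ⟨T, by simp [hTs, hT]⟩)

theorem IsGeneralOrthRepOn.exists_update [Finite V] [FiniteDimensional ℝ E] (hd : 1 ≤ d)
    (hE : 2 * d ≤ Module.finrank ℝ E) (hdeg : ∀ v, (H.neighborSet v).ncard ≤ d)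
    (hu : IsGeneralOrthRepOn H d s u) {v : V} (hv : v ∉ s) :
    ∃ x, IsGeneralOrthRepOn H d (insert v s) (Function.update u v x) := by
  obtain ⟨x, hxW, hxA, hxB⟩ := hu.exists_extension_vector hd hE hdeg hv
  have hx0 : x ≠ 0 := fun h => hxB ∅ (Finset.empty_subset _) (Nat.zero_le _) (h ▸ zero_mem _)
  have hxu : ∀ k ∈ s, ⟪u k, x⟫_ℝ = 0 ↔ H.Adj v k := fun k hk =>
    ⟨fun h => by_contra fun hvk => hxA k hk hvk h, fun hvk =>
      Submodule.inner_right_of_mem_orthogonal (K := Submodule.span ℝ (u '' (s.filter (H.Adj v))))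
        (Submodule.subset_span ⟨k, Finset.mem_filter.2 ⟨hk, hvk⟩, rfl⟩) hxW⟩
  have hupd : ∀ k ∈ s, Function.update u v x k = u k := fun k hk =>
    Function.update_of_ne (by rintro rfl; exact hv hk) _ _
  refine ⟨x, ⟨?_, ?_⟩⟩
  · intro j hj k hk
    rw [Finset.mem_insert] at hj hk
    rcases hj with rfl | hj <;> rcases hk with rfl | hk
    · simp [hx0]
    · rw [Function.update_self, hupd k hk, real_inner_comm]
      exact hxu k hk
    · rw [Function.update_self, hupd j hj, H.adj_comm]
      exact hxu j hj
    · rw [hupd j hj, hupd k hk]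
      exact hu.inner_eq_zero_iff j hj k hk
  · intro t hts htd
    by_cases hvt : v ∈ t
    · have hts' : t.erase v ⊆ s := Finset.subset_insert_iff.1 hts
      have heq : Set.EqOn (Function.update u v x) u ↑(t.erase v) := fun w hw => hupd w (hts' hw)
      rw [← Finset.insert_erase hvt, Finset.coe_insert, linearIndepOn_insert (by simp),
        Function.update_self, heq.image_eq]
      refine ⟨(hu.linearIndepOn _ hts' (Finset.card_erase_le.trans htd)).congr heq.symm,
        hxB _ hts' ?_⟩
      rw [Finset.card_erase_of_mem hvt]
      omega
    · have hts' : t ⊆ s := (Finset.subset_insert_iff_of_notMem hvt).1 hts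
      exact (hu.linearIndepOn t hts' htd).congr fun w hw => (hupd w (hts' hw)).symm

theorem exists_isGeneralOrthRepOn [Finite V] [FiniteDimensional ℝ E] (hd : 1 ≤ d)
    (hE : 2 * d ≤ Module.finrank ℝ E) (hdeg : ∀ v, (H.neighborSet v).ncard ≤ d) (s : Finset V) :
    ∃ u : V → E, IsGeneralOrthRepOn H d s u := by
  induction s using Finset.induction_on with
  | empty => exact ⟨0, by simp, fun t ht _ => by simp [Finset.subset_empty.1 ht]⟩
  | insert v s hv ih =>
    obtain ⟨u, hu⟩ := ih
    exact ⟨_, (hu.exists_update hd hE hdeg hv).choose_spec⟩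

end GeneralOrthRep

variable {V ι : Type*} [Fintype ι] {H : SimpleGraph V}

/-- The complement of Lovász's convention for orthogonal representations. -/
def IsOrthogonalityRep (H : SimpleGraph V) (M : Matrix V ι ℝ) : Prop :=
  ∀ j k, M j ⬝ᵥ M k = 0 ↔ H.Adj j k

theorem exists_isOrthogonalityRep [Finite V] {d m : ℕ} (hd : 1 ≤ d) (hm : 2 * d ≤ m)
    (hdeg : ∀ v, (H.neighborSet v).ncard ≤ d) :
    ∃ M : Matrix V (Fin m) ℝ, H.IsOrthogonalityRep M := by
  have := Fintype.ofFinite V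
  obtain ⟨u, hu⟩ := exists_isGeneralOrthRepOn (E := EuclideanSpace ℝ (Fin m)) hd
    (by rwa [finrank_euclideanSpace_fin]) hdeg Finset.univ
  refine ⟨fun j => u j, fun j k => ?_⟩
  rw [← hu.inner_eq_zero_iff j (Finset.mem_univ _) k (Finset.mem_univ _),
    EuclideanSpace.inner_eq_star_dotProduct, star_trivial, dotProduct_comm]

namespace IsOrthogonalityRep

variable {M : Matrix V ι ℝ}

theorem row_ne_zero (hM : H.IsOrthogonalityRep M) (j : V) : M j ≠ 0 :=
  fun h => H.irrefl ((hM j j).1 (by simp [h]))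

theorem smul_rows (hM : H.IsOrthogonalityRep M) {c : V → ℝ} (hc : ∀ j, c j ≠ 0) :
    H.IsOrthogonalityRep fun j => c j • M j := by
  intro j k
  rw [smul_dotProduct, dotProduct_smul, smul_eq_mul, smul_eq_mul, ← hM j k]
  simp [hc]

end IsOrthogonalityRep

end SimpleGraph

open SimpleGraph

section MarkedRep

variable {V ι : Type*} [Fintype ι]

variable (ι) in
noncomputable def orthogonalityRep (H : SimpleGraph V) : Matrix V ι ℝ :=
  Classical.epsilon H.IsOrthogonalityRep

theorem isOrthogonalityRep_orthogonalityRep {H : SimpleGraph V}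
    (h : ∃ M : Matrix V ι ℝ, H.IsOrthogonalityRep M) :
    H.IsOrthogonalityRep (orthogonalityRep ι H) :=
  Classical.epsilon_spec h

variable [DecidableEq V]

variable (ι) in
/-- Doubling the row of the marked vertex keeps the orthogonality pattern, and since the rows are
nonzero the mark can be read back off. -/
noncomputable def markedRep (x : V × SimpleGraph V) : Matrix V ι ℝ :=
  fun j => (if j = x.1 then (2 : ℝ) else 1) • orthogonalityRep ι x.2 j

theorem markedRep_isOrthogonalityRep {x : V × SimpleGraph V}
    (hx : ∃ M : Matrix V ι ℝ, x.2.IsOrthogonalityRep M) :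
    x.2.IsOrthogonalityRep (markedRep ι x) :=
  (isOrthogonalityRep_orthogonalityRep hx).smul_rows (c := fun j => if j = x.1 then 2 else 1)
    fun j => by split_ifs <;> norm_num

theorem markedRep_injOn : Set.InjOn (markedRep ι)
    {x : V × SimpleGraph V | ∃ M : Matrix V ι ℝ, x.2.IsOrthogonalityRep M} := by
  rintro ⟨i, H⟩ hx ⟨i', H'⟩ hx' heq
  obtain rfl : H = H' := by
    ext j k
    rw [← markedRep_isOrthogonalityRep hx j k, heq, markedRep_isOrthogonalityRep hx' j k]
  obtain rfl : i = i' := by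
    by_contra hne
    have hrow := congrFun heq i
    simp only [markedRep, ↓reduceIte, if_neg hne] at hrow
    have hr : orthogonalityRep ι H i ≠ 0 := (isOrthogonalityRep_orthogonalityRep hx).row_ne_zero i
    have : (2 : ℝ) = 1 := smul_left_injective ℝ hr hrow
    norm_num at this
  rfl

end MarkedRep

noncomputable def contextEncoding (n dmax : ℕ) :
    (l : ℕ) → Fin n × SimpleGraph (Fin n) → Matrix (Fin n) (Fin (width dmax l)) ℝ
  | 0, x => Matrix.of fun p _ => if p = x.1 then 1 else 0
  | _ + 1, x => markedRep (Fin (2 * dmax)) x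

def contextDomain (n dmax : ℕ) : ℕ → Set (Fin n × SimpleGraph (Fin n))
  | 0 => {x | x.2 = ⊥}
  | _ + 1 => {x | ∃ M : Matrix (Fin n) (Fin (2 * dmax)) ℝ, x.2.IsOrthogonalityRep M}

theorem contextEncoding_injOn (n dmax l : ℕ) :
    Set.InjOn (contextEncoding n dmax l) (contextDomain n dmax l) := by
  cases l with
  | zero =>
    rintro ⟨i, H⟩ (rfl : H = ⊥) ⟨i', H'⟩ (rfl : H' = ⊥) heq
    have := congrFun (congrFun heq i) (0 : Fin 1)
    change (if i = i then (1 : ℝ) else 0) = if i = i' then 1 else 0 at this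
    rw [if_pos rfl] at this
    split_ifs at this with h
    · rw [h]
    · norm_num at this
  | succ l => exact markedRep_injOn

/-- key lemma in the proof of Theorem 2. There is a sequence of
layers `f l` mapping a local context and the multiset of the neighbors' contexts to a
new `n × 2d_max` context such that, on every connected graph of maximum degree at most
`d_max`, running them from the one-hot initialization yields contexts whose rows encode
the receptive field by orthogonality:
`⟨U_i^{(l)}[j,:], U_i^{(l)}[k,:]⟩ = 0 ↔ (v_j, v_k) ∈ E_i^{(l)}`. -/
theorem receptive_field_orthogonality_encoding (n dmax : ℕ) (hn : 1 ≤ n)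
    (hd : 1 ≤ dmax) :
    ∃ f : (l : ℕ) → Matrix (Fin n) (Fin (width dmax l)) ℝ →
        Multiset (Matrix (Fin n) (Fin (width dmax l)) ℝ) →
        Matrix (Fin n) (Fin (width dmax (l + 1))) ℝ,
      ∀ (G : SimpleGraph (Fin n)), G.Connected → (∀ v, G.degree v ≤ dmax) →
        ∀ U : (l : ℕ) → Fin n → Matrix (Fin n) (Fin (width dmax l)) ℝ,
          (∀ i, U 0 i = Matrix.of fun p _ => if p = i then (1 : ℝ) else 0) →
          (∀ l i, U (l + 1) i =
            f l (U l i) ((G.neighborFinset i).val.map (fun j => U l j))) →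
          ∀ l, 1 ≤ l → ∀ i j k : Fin n,
            ((∑ t, U l i j t * U l i k t) = 0 ↔ (recepGraph G i l).Adj j k) := by
  have : Nonempty (Fin n × SimpleGraph (Fin n)) := ⟨(⟨0, hn⟩, ⊥)⟩
  refine ⟨simulationLayer (contextEncoding n dmax) (contextDomain n dmax) receptiveStep, ?_⟩
  intro G hG hdeg U hU0 hU l hl i j k
  have hrep (i : Fin n) (l : ℕ) :
      ∃ M : Matrix (Fin n) (Fin (2 * dmax)) ℝ, (recepGraph G i l).IsOrthogonalityRep M := by
    refine exists_isOrthogonalityRep hd le_rfl fun v => le_trans ?_ (hdeg v)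
    rw [← card_neighborSet_eq_degree, ← Set.toFinset_card, ← Set.ncard_eq_toFinset_card']
    exact Set.ncard_le_ncard fun w h => recepGraph_le i l h
  have hrun := simulationLayer_run_eq (contextEncoding_injOn n dmax)
    (fun i => (G.neighborFinset i).val) (fun l i => (i, recepGraph G i l))
    (fun l i => by cases l; exacts [recepGraph_zero i, hrep i _])
    (fun l i => (receptiveStep_recepGraph hG i l).symm) U hU0 hU
  obtain ⟨l, rfl⟩ := Nat.exists_eq_add_of_le' hl
  rw [hrun]
  exact markedRep_isOrthogonalityRep (hrep i _) j k
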